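/- The real polynomial P(t_1,t_2) = t_1^2 + t_2^2(1 − t_1 t_2)^2 satisfies: (i) its real zero set Z(P) = {t ∈ ℝ^2 : P(t) = 0} equals {0}; (ii) |P(t)| ≤ 2 for every t in the unbounded set {t ∈ ℝ^2 : t_1 t_2 = 1, |t_1| ≤ 1}. In particular there are no constants β, L_0 > 0 such that |P(t)| ≥ |t|^β for all |t| ≥ L_0, i.e. P fails Condition (Ł) despite having bounded zero set. -/

import Mathlib

open scoped BigOperators ENNReal NNReal Real Classical
open MeasureTheory Complex Set

noncomputable section

namespace SparseRadon

/-- `e(t) = exp(2πit)` for real `t`. -/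
def eR (t : ℝ) : ℂ := Complex.exp ((2 * Real.pi * t : ℝ) * Complex.I)

/-- Coefficient data of a polynomial mapping `ℤ^d → ℤ^n`:
finitely many integer-vector coefficients indexed by multiindices. -/
abbrev Coeffs (d n : ℕ) := (Fin d → ℕ) →₀ (Fin n → ℤ)

variable {d n : ℕ}

/-- Evaluation of the polynomial mapping over `ℤ`. -/
def evalZ (c : Coeffs d n) (t : Fin d → ℤ) : Fin n → ℤ := fun i =>
  ∑ α ∈ c.support, c α i * ∏ l, t l ^ α l

/-- Evaluation of the polynomial mapping over `ℝ`. -/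
def evalR (c : Coeffs d n) (t : Fin d → ℝ) : Fin n → ℝ := fun i =>
  ∑ α ∈ c.support, (c α i : ℝ) * ∏ l, t l ^ α l

/-- Degree `D_i` of the `i`-th component polynomial. -/
def degi (c : Coeffs d n) (i : Fin n) : ℕ :=
  (c.support.filter fun α => c α i ≠ 0).sup fun α => ∑ l, α l

/-- Total degree `deg P`. -/
def degP (c : Coeffs d n) : ℕ := Finset.univ.sup (degi c)

/-- `D_* = max{α_i : c_α ≠ 0, i = 1,…,d}`. -/
def Dstar (c : Coeffs d n) : ℕ := c.support.sup fun α => Finset.univ.sup fun l => α l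

/-- View a plain vector as an element of Euclidean space. -/
def eucl {m : ℕ} (v : Fin m → ℝ) : EuclideanSpace ℝ (Fin m) := (WithLp.equiv 2 _).symm v

/-- Condition (C). -/
def CondC (c : Coeffs d n) : Prop :=
  ∀ i : Fin n, ∃ α : Fin d → ℕ, (∑ l, α l) = degi c i ∧ c α = Pi.single i 1

/-- Condition (Ł) with constants `β, L0`. -/
def CondL (c : Coeffs d n) (β L0 : ℝ) : Prop :=
  0 < β ∧ 0 < L0 ∧ ∀ t : EuclideanSpace ℝ (Fin d), L0 ≤ ‖t‖ →
    ‖t‖ ^ β ≤ ‖eucl (evalR c fun l => t l)‖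

/-- Admissibility of the polynomial mapping. -/
def Admissible (c : Coeffs d n) : Prop :=
  c 0 = 0 ∧ (∃ β L0, CondL c β L0) ∧ CondC c

/-- Calderón–Zygmund kernel on `ℝ^d`. -/
def IsCZ (d : ℕ) (K : EuclideanSpace ℝ (Fin d) → ℂ) : Prop :=
  (∀ y : EuclideanSpace ℝ (Fin d), 1 ≤ ‖y‖ →
      ‖y‖ ^ d * ‖K y‖ + ‖y‖ ^ (d + 1) * ‖fderiv ℝ K y‖ ≤ 1) ∧
  ∀ lam : ℝ, 1 ≤ lam →
    ‖∫ y in {y : EuclideanSpace ℝ (Fin d) | 1 ≤ ‖y‖ ∧ ‖y‖ ≤ lam}, K y‖ ≤ 1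

/-- A smooth dyadic partition of unity function `ψ`. -/
def IsDyadicPartition (d : ℕ) (ψ : EuclideanSpace ℝ (Fin d) → ℝ) : Prop :=
  ContDiff ℝ (⊤ : ℕ∞) ψ ∧ (∀ x, ψ x ≠ 0 → 1 / 2 ≤ ‖x‖ ∧ ‖x‖ ≤ 2) ∧
    (∀ x, 0 ≤ ψ x ∧ ψ x ≤ 1) ∧
    ∀ x : EuclideanSpace ℝ (Fin d), x ≠ 0 → (∑' j : ℤ, ψ (((2:ℝ) ^ (-j)) • x)) = 1

/-- The truncated kernel `K_j(x) = ψ(2^{-j} x) K(x)`. -/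
def Kcut (K : EuclideanSpace ℝ (Fin d) → ℂ) (ψ : EuclideanSpace ℝ (Fin d) → ℝ) (j : ℕ)
    (x : EuclideanSpace ℝ (Fin d)) : ℂ :=
  (ψ (((2:ℝ) ^ (-(j : ℤ))) • x) : ℝ) * K x

/-- `Φ_j(ξ) = ∫ e(P(t)·ξ) K_j(t) dt`. -/
def Phij (c : Coeffs d n) (K : EuclideanSpace ℝ (Fin d) → ℂ)
    (ψ : EuclideanSpace ℝ (Fin d) → ℝ) (j : ℕ) (ξ : Fin n → ℝ) : ℂ :=
  ∫ t : EuclideanSpace ℝ (Fin d), eR (∑ i, evalR c (fun l => t l) i * ξ i) * Kcut K ψ j t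

/-- `m_j(ξ) = Σ_{y ∈ ℤ^d} e(P(y)·ξ) K_j(y)`. -/
def mj (c : Coeffs d n) (K : EuclideanSpace ℝ (Fin d) → ℂ)
    (ψ : EuclideanSpace ℝ (Fin d) → ℝ) (j : ℕ) (ξ : Fin n → ℝ) : ℂ :=
  ∑' y : Fin d → ℤ, eR (∑ i, (evalZ c y i : ℝ) * ξ i) * Kcut K ψ j (eucl fun l => (y l : ℝ))

/-- `gcd(a_1,…,a_n,q) = 1`. -/
def gcdCond (a : Fin n → ℤ) (q : ℕ) : Prop :=
  Nat.gcd (Finset.univ.gcd fun i => (a i).natAbs) q = 1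

/-- The Weyl sum `S(a/q)`. -/
def weyl (c : Coeffs d n) (a : Fin n → ℤ) (q : ℕ) : ℂ :=
  (q : ℂ)⁻¹ ^ d * ∑ r : Fin d → Fin q,
    eR (∑ i, (evalZ c (fun l => ((r l : ℕ) : ℤ)) i : ℝ) * (a i : ℝ) / (q : ℝ))

/-- The major arc `𝔐_j(a/q)`. -/
def majorArc (c : Coeffs d n) (δ : ℝ) (j : ℕ) (a : Fin n → ℤ) (q : ℕ) : Set (Fin n → ℝ) :=
  {ξ | ∀ i, |ξ i - (a i : ℝ) / (q : ℝ)| ≤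
    (2:ℝ) ^ (-(((degi c i : ℝ) - 1) * (j : ℝ))) * (2:ℝ) ^ (-(δ * (j : ℝ)))}

/-- Membership of `a/q` in the class `R_k` of reduced rationals in `[0,1)^n` with
denominator of size `≈ 2^k`. -/
def inRk (k : ℕ) (a : Fin n → ℤ) (q : ℕ) : Prop :=
  gcdCond a q ∧ (∀ i, 0 ≤ a i ∧ a i < (q : ℤ)) ∧ 2 ^ (k - 1) ≤ q ∧ q < 2 ^ k

/-- The periodized rescaled bump `χ_k`. -/
def chiK (χ : EuclideanSpace ℝ (Fin n) → ℝ) (k : ℕ) (ξ : Fin n → ℝ) : ℝ :=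
  χ (eucl fun i => (2:ℝ) ^ (10 * k) * (ξ i - round (ξ i)))

/-- The bump function `χ`. -/
def IsChi (χ : EuclideanSpace ℝ (Fin n) → ℝ) : Prop :=
  ContDiff ℝ (⊤ : ℕ∞) χ ∧ (∀ ξ, χ ξ ≠ 0 → ‖ξ‖ ≤ 2) ∧ ∀ ξ, ‖ξ‖ ≤ 1 → χ ξ = 1

/-- `L_{j,k}`. -/
def Ljk (c : Coeffs d n) (K : EuclideanSpace ℝ (Fin d) → ℂ)
    (ψ : EuclideanSpace ℝ (Fin d) → ℝ) (χ : EuclideanSpace ℝ (Fin n) → ℝ)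
    (j k : ℕ) (ξ : Fin n → ℝ) : ℂ :=
  ∑' p : (Fin n → ℤ) × ℕ,
    if inRk k p.1 p.2 then
      weyl c p.1 p.2 * Phij c K ψ j (fun i => ξ i - (p.1 i : ℝ) / (p.2 : ℝ)) *
        (chiK χ k (fun i => ξ i - (p.1 i : ℝ) / (p.2 : ℝ)) : ℝ)
    else 0

/-- `L_j = Σ_{1 ≤ k ≤ jδ'} L_{j,k}`. -/
def Lj (c : Coeffs d n) (K : EuclideanSpace ℝ (Fin d) → ℂ)
    (ψ : EuclideanSpace ℝ (Fin d) → ℝ) (χ : EuclideanSpace ℝ (Fin n) → ℝ)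
    (δ' : ℝ) (j : ℕ) (ξ : Fin n → ℝ) : ℂ :=
  ∑ k ∈ Finset.Icc 1 ⌊(j : ℝ) * δ'⌋₊, Ljk c K ψ χ j k ξ

/-- `L^{(k)} = Σ_{j ≥ k/δ'} L_{j,k}`. -/
def Lk (c : Coeffs d n) (K : EuclideanSpace ℝ (Fin d) → ℂ)
    (ψ : EuclideanSpace ℝ (Fin d) → ℝ) (χ : EuclideanSpace ℝ (Fin n) → ℝ)
    (δ' : ℝ) (k : ℕ) (ξ : Fin n → ℝ) : ℂ :=
  ∑' j : ℕ, if (k : ℝ) ≤ (j : ℝ) * δ' then Ljk c K ψ χ j k ξ else 0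

/-- The minor arc error multiplier `E_j = m_j - L_j`. -/
def Ej (c : Coeffs d n) (K : EuclideanSpace ℝ (Fin d) → ℂ)
    (ψ : EuclideanSpace ℝ (Fin d) → ℝ) (χ : EuclideanSpace ℝ (Fin n) → ℝ)
    (δ' : ℝ) (j : ℕ) (ξ : Fin n → ℝ) : ℂ :=
  mj c K ψ j ξ - Lj c K ψ χ δ' j ξ

/-- The fundamental domain `[0,1)^n`. -/
def box (n : ℕ) : Set (Fin n → ℝ) := Set.univ.pi fun _ => Set.Ico (0:ℝ) 1

/-- Fourier transform of `f : ℤ^n → ℂ`. -/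
def dFT (f : (Fin n → ℤ) → ℂ) (ξ : Fin n → ℝ) : ℂ :=
  ∑' x : Fin n → ℤ, f x * eR (-(∑ i, ξ i * (x i : ℝ)))

/-- Inverse Fourier transform of a (periodic) function on `ℝ^n`, evaluated on `ℤ^n`. -/
def invFT (g : (Fin n → ℝ) → ℂ) (x : Fin n → ℤ) : ℂ :=
  ∫ ξ in box n, g ξ * eR (∑ i, ξ i * (x i : ℝ))

/-- The Fourier multiplier operator `m(∇)`. -/
def multOp (m : (Fin n → ℝ) → ℂ) (f : (Fin n → ℤ) → ℂ) (x : Fin n → ℤ) : ℂ :=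
  ∫ ξ in box n, m ξ * dFT f ξ * eR (∑ i, ξ i * (x i : ℝ))

/-- Convolution on `ℤ^n`. -/
def conv (Kk f : (Fin n → ℤ) → ℂ) (x : Fin n → ℤ) : ℂ :=
  ∑' y : Fin n → ℤ, Kk (x - y) * f y

/-- The `ℓ²(ℤ^n)` pairing `⟨f, g⟩`. -/
def pairing (f g : (Fin n → ℤ) → ℂ) : ℂ :=
  ∑' x : Fin n → ℤ, f x * (starRingEnd ℂ) (g x)

/-- The discrete singular Radon transform `T_P`. -/
def TP (c : Coeffs d n) (K : EuclideanSpace ℝ (Fin d) → ℂ)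
    (f : (Fin n → ℤ) → ℂ) (x : Fin n → ℤ) : ℂ :=
  ∑' y : Fin d → ℤ, if y ≠ 0 then f (x + evalZ c y) * K (eucl fun l => (y l : ℝ)) else 0

/-- A `P`-cube: the set of integer points of a box `I_1 × ⋯ × I_n` whose sides are
bounded intervals satisfying `|I_1|^{1/D_1} = ⋯ = |I_n|^{1/D_n}`
(written multiplicatively as `|I_i|^{D_j} = |I_j|^{D_i}`). -/
structure PCube (n : ℕ) (Dd : Fin n → ℕ) where
  I : Fin n → Set ℝ
  ordConn : ∀ i, (I i).OrdConnected
  bdd : ∀ i, Bornology.IsBounded (I i)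
  compat : ∀ i j, Metric.diam (I i) ^ Dd j = Metric.diam (I j) ^ Dd i

namespace PCube

variable {Dd : Fin n → ℕ}

/-- The integer points of a `P`-cube. -/
def pts (Q : PCube n Dd) : Set (Fin n → ℤ) := {x | ∀ i, ((x i : ℝ)) ∈ Q.I i}

/-- `|Q|`, the number of integer points of `Q` (counting measure). -/
def card (Q : PCube n Dd) : ℕ := Nat.card Q.pts

/-- The sidelength `ℓ(Q) = |I_1 ∩ ℤ|^{1/D_1}`. -/
def side [NeZero n] (Q : PCube n Dd) : ℝ :=
  (Nat.card {m : ℤ | ((m : ℝ)) ∈ Q.I (0 : Fin n)} : ℝ) ^ ((Dd (0 : Fin n) : ℝ))⁻¹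

/-- The concentric dilate of a `P`-cube by an integer factor `m ≥ 1`:
each side is replaced by the concentric interval of length `m^{D_i} |I_i|`,
so that the sidelength gets multiplied by `m`.  `2Q = Q.scale 2`,
`2^ν Q = Q.scale (2^ν)`. -/
def scale (Q : PCube n Dd) (m : ℕ) : PCube n Dd where
  I i := Set.Icc
    ((sInf (Q.I i) + sSup (Q.I i)) / 2 - (m : ℝ) ^ Dd i * Metric.diam (Q.I i) / 2)
    ((sInf (Q.I i) + sSup (Q.I i)) / 2 + (m : ℝ) ^ Dd i * Metric.diam (Q.I i) / 2)
  ordConn _ := Set.ordConnected_Icc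
  bdd _ := Metric.isBounded_Icc _ _
  compat i j := by
    have h : ∀ l : Fin n, (0:ℝ) ≤ (m : ℝ) ^ Dd l * Metric.diam (Q.I l) / 2 := by
      intro l
      have := Metric.diam_nonneg (s := Q.I l)
      positivity
    rw [Real.diam_Icc (by linarith [h i]), Real.diam_Icc (by linarith [h j])]
    have e1 : ∀ l : Fin n,
        ((sInf (Q.I l) + sSup (Q.I l)) / 2 + (m : ℝ) ^ Dd l * Metric.diam (Q.I l) / 2) -
          ((sInf (Q.I l) + sSup (Q.I l)) / 2 - (m : ℝ) ^ Dd l * Metric.diam (Q.I l) / 2) =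
          (m : ℝ) ^ Dd l * Metric.diam (Q.I l) := by intro l; ring
    rw [e1 i, e1 j, mul_pow, mul_pow, ← pow_mul, ← pow_mul,
      Nat.mul_comm (Dd i) (Dd j), Q.compat i j]

end PCube

/-- The `r`-average `⟨f⟩_{Q,r}` (with values in `ℝ≥0∞`), for functions with values in a
normed space; `r = ∞` gives the sup-average. -/
def eAvg {Dd : Fin n → ℕ} {E : Type*} [NormedAddCommGroup E]
    (Q : PCube n Dd) (r : ℝ≥0∞) (h : (Fin n → ℤ) → E) : ℝ≥0∞ :=
  if r = ∞ then ⨆ x : Q.pts, (‖h x.1‖₊ : ℝ≥0∞)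
  else ((Q.card : ℝ≥0∞)⁻¹ * ∑' x : Q.pts, (‖h x.1‖₊ : ℝ≥0∞) ^ r.toReal) ^ (1 / r.toReal)

/-- A `σ`-sparse family of `P`-cubes. -/
def IsSparse {Dd : Fin n → ℕ} (σ : ℝ) (S : Set (PCube n Dd)) : Prop :=
  ∃ E : PCube n Dd → Set (Fin n → ℤ),
    (∀ Q ∈ S, E Q ⊆ Q.pts ∧ σ * (Q.card : ℝ) ≤ (Nat.card (E Q) : ℝ)) ∧
    S.PairwiseDisjoint E

/-- The sparse form `Λ^S_{r,s}(f,g)`. -/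
def Lam {Dd : Fin n → ℕ} {E F : Type*} [NormedAddCommGroup E] [NormedAddCommGroup F]
    (S : Set (PCube n Dd)) (r s : ℝ≥0∞)
    (f : (Fin n → ℤ) → E) (g : (Fin n → ℤ) → F) : ℝ≥0∞ :=
  ∑' Q : S, (Q.1.card : ℝ≥0∞) * eAvg Q.1 r f * eAvg Q.1 s g

/-- `sup_S Λ^S_{r,s}(f,g)` over all `σ`-sparse collections. -/
def supLam (Dd : Fin n → ℕ) (σ : ℝ) (r s : ℝ≥0∞) (f g : (Fin n → ℤ) → ℂ) : ℝ≥0∞ :=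
  ⨆ (S : Set (PCube n Dd)) (_ : IsSparse σ S), Lam S r s f g

/-- The sparse operator norm `‖T‖_{sp(r,s)}` (with sparsity parameter `σ`). -/
def spNorm (Dd : Fin n → ℕ) (σ : ℝ) (r s : ℝ≥0∞)
    (T : ((Fin n → ℤ) → ℂ) → (Fin n → ℤ) → ℂ) : ℝ≥0∞ :=
  sInf {cc : ℝ≥0∞ | ∀ f g : (Fin n → ℤ) → ℂ,
    (Function.support f).Finite → (Function.support g).Finite →
    (‖pairing (T f) g‖₊ : ℝ≥0∞) ≤ cc * supLam Dd σ r s f g}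

/-- The maximal operator `M_P` with respect to `P`-cubes. -/
def MP (Dd : Fin n → ℕ) (f : (Fin n → ℤ) → ℂ) (x : Fin n → ℤ) : ℝ :=
  (⨆ Q : PCube n Dd, (Q.card : ℝ≥0∞)⁻¹ * ∑' y : Q.pts, (‖f (x - y.1)‖₊ : ℝ≥0∞)).toReal

/-- The `ℓ^p(ℤ^n)` norm. -/
def elpN (p : ℝ≥0∞) (f : (Fin n → ℤ) → ℂ) : ℝ≥0∞ :=
  if p = ∞ then ⨆ x : Fin n → ℤ, (‖f x‖₊ : ℝ≥0∞)
  else (∑' x : Fin n → ℤ, (‖f x‖₊ : ℝ≥0∞) ^ p.toReal) ^ (1 / p.toReal)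

/-- The `ℓ^r → ℓ^s` operator norm (tested on finitely supported functions). -/
def opN (r s : ℝ≥0∞) (T : ((Fin n → ℤ) → ℂ) → (Fin n → ℤ) → ℂ) : ℝ≥0∞ :=
  sInf {A : ℝ≥0∞ | ∀ f : (Fin n → ℤ) → ℂ, (Function.support f).Finite →
    elpN s (T f) ≤ A * elpN r f}

/-- Hölder conjugate exponent in `ℝ≥0∞`. -/
def conjExp (r : ℝ≥0∞) : ℝ≥0∞ := (1 - r⁻¹)⁻¹

/-- Converts `u = 1/r ∈ [0,1]` into the exponent `r ∈ [1,∞]`. -/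
def expOf (u : ℝ) : ℝ≥0∞ := (ENNReal.ofReal u)⁻¹

/-- The unit square `[0,1]²`. -/
def unitSq : Set (ℝ × ℝ) := Set.Icc (0:ℝ) 1 ×ˢ Set.Icc (0:ℝ) 1

/-- The anisotropic norm `ρ(x) = max_i |x_i|^{1/D_i}`. -/
def rhoA (Dd : Fin n → ℕ) (x : Fin n → ℤ) : ℝ :=
  ⨆ i : Fin n, |(x i : ℝ)| ^ ((Dd i : ℝ))⁻¹

/-- The kernel `𝒦_j 𝟙_{Q_*}` of the error term, restricted to
`Q_* = {ρ(x) ≤ 2^{(D+1)j}}`. -/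
def KjRes (c : Coeffs d n) (K : EuclideanSpace ℝ (Fin d) → ℂ)
    (ψ : EuclideanSpace ℝ (Fin d) → ℝ) (χ : EuclideanSpace ℝ (Fin n) → ℝ)
    (δ' : ℝ) (j : ℕ) (x : Fin n → ℤ) : ℂ :=
  if rhoA (degi c) x ≤ (2:ℝ) ^ (((degP c : ℝ) + 1) * (j : ℝ))
    then invFT (Ej c K ψ χ δ' j) x else 0

/-- The kernel `𝒦_j 𝟙_{Q_*^c}`. -/
def KjOut (c : Coeffs d n) (K : EuclideanSpace ℝ (Fin d) → ℂ)
    (ψ : EuclideanSpace ℝ (Fin d) → ℝ) (χ : EuclideanSpace ℝ (Fin n) → ℝ)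
    (δ' : ℝ) (j : ℕ) (x : Fin n → ℤ) : ℂ :=
  if rhoA (degi c) x ≤ (2:ℝ) ^ (((degP c : ℝ) + 1) * (j : ℝ))
    then 0 else invFT (Ej c K ψ χ δ' j) x

/-- `𝒜_{k,a/q}[f]`. -/
def Akaq (χ : EuclideanSpace ℝ (Fin n) → ℝ) (k : ℕ) (a : Fin n → ℤ) (q : ℕ)
    (f : (Fin n → ℤ) → ℂ) (x : Fin n → ℤ) : ℂ :=
  ∫ ξ in box n, (chiK χ k ξ : ℝ) * dFT f (fun i => ξ i + (a i : ℝ) / (q : ℝ)) *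
    eR (∑ i, ξ i * (x i : ℝ))

/-- The pointwise `ℋ_k`-norm of `𝒜_k[f]`,
`‖𝒜_k[f](x)‖_{ℋ_k} = (Σ_{a/q ∈ R_k} |𝒜_{k,a/q}[f](x)|²)^{1/2}`. -/
def AkNorm (χ : EuclideanSpace ℝ (Fin n) → ℝ) (k : ℕ)
    (f : (Fin n → ℤ) → ℂ) (x : Fin n → ℤ) : ℝ :=
  (∑' p : {p : (Fin n → ℤ) × ℕ // inRk k p.1 p.2}, ‖Akaq χ k p.1.1 p.1.2 f x‖ ^ 2) ^ (1/2 : ℝ)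

/-- The single-scale real-variable Radon transform `𝒯_{P,ψ̃}` on `ℝ^n`. -/
def singleScaleOp (c : Coeffs d n) (ψt : EuclideanSpace ℝ (Fin d) → ℂ)
    (f : (Fin n → ℝ) → ℂ) (x : Fin n → ℝ) : ℂ :=
  ∫ t : EuclideanSpace ℝ (Fin d), f (fun i => x i + evalR c (fun l => t l) i) * ψt t

/-- The `L^p → L^q` bound for single-scale operators, with constants depending only on
finitely many derivatives of the (annulus-supported) bump `ψ̃`. -/
def singleScaleBound (c : Coeffs d n) (p q : ℝ≥0∞) : Prop :=
  ∃ (N : ℕ) (C : ℝ), 0 < C ∧ ∀ ψt : EuclideanSpace ℝ (Fin d) → ℂ,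
    ContDiff ℝ (⊤ : ℕ∞) ψt → (∀ t, ψt t ≠ 0 → 1 / 2 ≤ ‖t‖ ∧ ‖t‖ ≤ 2) →
    (∀ m : ℕ, m ≤ N → ∀ t, ‖iteratedFDeriv ℝ m ψt t‖ ≤ 1) →
    ∀ f : (Fin n → ℝ) → ℂ,
      eLpNorm (singleScaleOp c ψt f) q volume ≤ ENNReal.ofReal C * eLpNorm f p volume

/-- The region `Ω_c ⊆ [0,1]²` of exponents `(1/r, 1/s)` governed by `L^p`-improving
bounds for the single-scale operators. -/
def OmegaC (c : Coeffs d n) : Set (ℝ × ℝ) :=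
  interior {uv : ℝ × ℝ | uv ∈ unitSq ∧ ∃ p q : ℝ≥0∞,
    1 ≤ p ∧ p ≤ (ENNReal.ofReal uv.1)⁻¹ ∧ (ENNReal.ofReal (1 - uv.2))⁻¹ ≤ q ∧ p < q ∧
    singleScaleBound c p q}

/-- The real-variable Radon transform acting on Hilbert-space valued functions on `ℤ^n`
(via rounding to nearest integer points). -/
def radon {H : Type*} [NormedAddCommGroup H] [NormedSpace ℂ H]
    (c : Coeffs d n) (K : EuclideanSpace ℝ (Fin d) → ℂ)
    (F : (Fin n → ℤ) → H) (x : Fin n → ℤ) : H :=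
  ∫ t : EuclideanSpace ℝ (Fin d),
    K t • F (fun i => round ((x i : ℝ) + evalR c (fun l => t l) i))

/-- First-order partial derivative. -/
def pderiv1 (i : Fin n) (F : (Fin n → ℝ) → ℂ) : (Fin n → ℝ) → ℂ := fun ξ =>
  fderiv ℝ F ξ (Pi.single i 1)

/-- The multiindex partial derivative `∂_α`. -/
def pderivMulti (α : Fin n → ℕ) (F : (Fin n → ℝ) → ℂ) : (Fin n → ℝ) → ℂ :=
  (List.finRange n).foldr (fun i G => (pderiv1 i)^[α i] G) F

end SparseRadon

def pt (a b : ℝ) : EuclideanSpace ℝ (Fin 2) := (WithLp.equiv 2 _).symm ![a, b]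

lemma pt0 (a b : ℝ) : pt a b 0 = a := rfl
lemma pt1 (a b : ℝ) : pt a b 1 = b := rfl

lemma abs_le_norm (t : EuclideanSpace ℝ (Fin 2)) : |t 1| ≤ ‖t‖ := by
  have := EuclideanSpace.norm_eq t
  rw [this]
  have : |t 1| = Real.sqrt ((t 1)^2) := (Real.sqrt_sq_eq_abs _).symm
  rw [this]
  apply Real.sqrt_le_sqrt
  rw [Fin.sum_univ_two]
  simp [sq_abs]
  positivity

/-- The polynomial `P(t₁,t₂) = t₁² + t₂²(1 - t₁t₂)²` has zero set `{0}`, is bounded by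
`2` on the unbounded set `{t₁t₂ = 1, |t₁| ≤ 1}`, and in particular fails
Condition (Ł). -/
theorem statement19 :
    ({t : EuclideanSpace ℝ (Fin 2) |
        (t 0) ^ 2 + (t 1) ^ 2 * (1 - t 0 * t 1) ^ 2 = 0} = {0}) ∧
    (∀ t : EuclideanSpace ℝ (Fin 2), t 0 * t 1 = 1 → |t 0| ≤ 1 →
      |(t 0) ^ 2 + (t 1) ^ 2 * (1 - t 0 * t 1) ^ 2| ≤ 2) ∧
    ¬ Bornology.IsBounded
        {t : EuclideanSpace ℝ (Fin 2) | t 0 * t 1 = 1 ∧ |t 0| ≤ 1} ∧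
    ¬ ∃ β L0 : ℝ, 0 < β ∧ 0 < L0 ∧
        ∀ t : EuclideanSpace ℝ (Fin 2), L0 ≤ ‖t‖ →
          ‖t‖ ^ β ≤ |(t 0) ^ 2 + (t 1) ^ 2 * (1 - t 0 * t 1) ^ 2| := by
  refine ⟨?_, ?_, ?_, ?_⟩
  · ext t
    simp only [Set.mem_setOf_eq, Set.mem_singleton_iff]
    constructor
    · intro h
      have h0 : t 0 = 0 := by
        have : t 0 ^ 2 = 0 := by nlinarith [sq_nonneg (t 0), sq_nonneg (t 1 * (1 - t 0 * t 1))]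
        exact pow_eq_zero_iff (two_ne_zero) |>.mp this
      have h1 : t 1 = 0 := by rw [h0] at h; simpa using h
      ext i
      fin_cases i <;> simp [h0, h1]
    · rintro rfl; simp
  · intro t h1 h2
    rw [h1]
    simp only [sub_self]
    rw [_root_.abs_of_nonneg (by positivity)]
    nlinarith [abs_nonneg (t 0), _root_.sq_abs (t 0)]
  · intro hb
    obtain ⟨R, hR⟩ := (isBounded_iff_forall_norm_le).mp hb
    obtain ⟨m, hm⟩ := exists_nat_gt (max R 1)
    set x := pt ((m:ℝ))⁻¹ (m:ℝ) with hxdef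
    have hm1 : (1:ℝ) ≤ m := le_trans (le_max_right R 1) hm.le
    have hx : x ∈ {t : EuclideanSpace ℝ (Fin 2) | t 0 * t 1 = 1 ∧ |t 0| ≤ 1} := by
      constructor
      · rw [hxdef, pt0, pt1]; field_simp
      · rw [hxdef, pt0, _root_.abs_of_nonneg (by positivity)]
        rw [inv_le_one_iff₀]; right; exact hm1
    have hRx := hR x hx
    have h2 : (m:ℝ) ≤ ‖x‖ := by
      have h3 := abs_le_norm x
      rw [hxdef, pt1, _root_.abs_of_nonneg (by positivity)] at h3
      exact h3
    have hmR : R < (m:ℝ) := lt_of_le_of_lt (le_max_left R 1) hm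
    linarith
  · rintro ⟨β, L0, hβ, hL0, h⟩
    obtain ⟨m, hm⟩ := exists_nat_gt (max L0 2)
    set x := pt ((m:ℝ))⁻¹ (m:ℝ) with hxdef
    have hm2 : (2:ℝ) ≤ m := le_trans (le_max_right L0 2) hm.le
    have hmpos : (0:ℝ) < m := by linarith
    have h2 : (m:ℝ) ≤ ‖x‖ := by
      have h3 := abs_le_norm x
      rw [hxdef, pt1, _root_.abs_of_nonneg hmpos.le] at h3
      exact h3
    have hL : L0 ≤ ‖x‖ := le_trans (le_trans (le_max_left L0 2) hm.le) h2
    have hval := h x hL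
    have he : x 0 * x 1 = 1 := by rw [hxdef, pt0, pt1]; field_simp
    rw [he] at hval
    simp only [sub_self] at hval
    have hub : |(x 0)^2 + (x 1)^2 * (0:ℝ)^2| ≤ 1 := by
      rw [hxdef, pt0, pt1]
      have hle : ((m:ℝ))⁻¹ ≤ 1 := by rw [inv_le_one_iff₀]; right; linarith
      have h0 : (0:ℝ) ≤ ((m:ℝ))⁻¹ := by positivity
      rw [_root_.abs_of_nonneg (by positivity)]
      nlinarith
    have hgt : (1:ℝ) < ‖x‖ ^ β := by
      rw [Real.one_lt_rpow_iff_of_pos (by linarith)]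
      left; exact ⟨by linarith, hβ⟩
    linarith
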